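/- Let z_k* be the smallest positive real zero of S_k, where S_1(z) = 1 - z and S_k(z) = S_{k-1}(z) - z/S_{k-1}(z). Then for all k ≥ 1, z_k* ≤ 1 / (2k(1 - (1/(4k))^{1/4})). -/
import Mathlib


open Real Finset

/-- The sequence of functions `S_k`, with `S 1 z = 1 - z` and
`S k z = S (k-1) z - z / S (k-1) z` for `k ≥ 2`.  (`S 0` is junk.) -/
noncomputable def S : ℕ → ℝ → ℝ
  | 0, z => 1 - z
  | 1, z => 1 - z
  | (k + 2), z => S (k + 1) z - z / S (k + 1) z

lemma S_one (z : ℝ) : S 1 z = 1 - z := rfl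
lemma S_succ_eq (m : ℕ) (hm : 1 ≤ m) (z : ℝ) : S (m + 1) z = S m z - z / S m z := by
  match m, hm with
  | (n + 1), _ => rfl
lemma S_eq_zero_mono {j m : ℕ} (hj : 1 ≤ j) (hjm : j ≤ m) {z : ℝ} (h : S j z = 0) :
    S m z = 0 := by
  induction m with
  | zero => exact (Nat.not_succ_le_zero 0 (hj.trans hjm)).elim
  | succ m ih =>
    by_cases hjm' : j ≤ m
    · have h0 : S m z = 0 := ih hjm'
      rw [S_succ_eq m (hj.trans hjm'), h0, div_zero, sub_zero]
    · have : j = m + 1 := by omega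
      subst this; exact h
lemma S_apply_zero (j : ℕ) (hj : 1 ≤ j) : S j 0 = 1 := by
  induction j with
  | zero => exact absurd hj (by norm_num)
  | succ j ih =>
    rcases Nat.eq_zero_or_pos j with rfl | hj0
    · rw [S_one]; norm_num
    · rw [S_succ_eq j hj0, ih hj0, zero_div, sub_zero]

lemma S_poscont (k : ℕ) (hk : 1 ≤ k) (b : ℝ) (hb0 : 0 ≤ b) (hb1 : b < 1)
    (hnz : ∀ x ∈ Set.Icc (0:ℝ) b, S k x ≠ 0) :
    ∀ j, 1 ≤ j → j ≤ k →
      ContinuousOn (S j) (Set.Icc 0 b) ∧ ∀ x ∈ Set.Icc (0:ℝ) b, 0 < S j x := by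
  have hjnz : ∀ j, 1 ≤ j → j ≤ k → ∀ x ∈ Set.Icc (0:ℝ) b, S j x ≠ 0 := by
    intro j hj hjk x hx h
    exact hnz x hx (S_eq_zero_mono hj hjk h)
  intro j
  induction j with
  | zero => intro h; exact absurd h (by norm_num)
  | succ j ih =>
    intro _ hjk
    rcases Nat.eq_zero_or_pos j with rfl | hj0
    · constructor
      · have h1 : ∀ z : ℝ, S 1 z = 1 - z := fun z => rfl
        have : ContinuousOn (fun z : ℝ => 1 - z) (Set.Icc 0 b) :=
          (continuousOn_const.sub continuousOn_id)
        exact this.congr fun x _ => h1 x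
      · intro x hx
        rw [S_one]; linarith [hx.2]
    · obtain ⟨ihc, ihp⟩ := ih hj0 (by omega)
      have heq : ∀ z : ℝ, S (j+1) z = S j z - z / S j z := S_succ_eq j hj0
      have hcont : ContinuousOn (S (j+1)) (Set.Icc 0 b) := by
        have : ContinuousOn (fun z : ℝ => S j z - z / S j z) (Set.Icc 0 b) :=
          ihc.sub (continuousOn_id.div ihc fun x hx => (ihp x hx).ne')
        exact this.congr fun x _ => heq x
      refine ⟨hcont, ?_⟩
      by_contra hcon
      push_neg at hcon
      obtain ⟨x0, hx0, hle⟩ := hcon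
      have hsub : Set.Icc (0:ℝ) x0 ⊆ Set.Icc 0 b := Set.Icc_subset_Icc le_rfl hx0.2
      have hiv := intermediate_value_Icc' hx0.1 (hcont.mono hsub)
      have h1 : S (j+1) 0 = 1 := S_apply_zero (j+1) (by omega)
      have hmem : (0:ℝ) ∈ Set.Icc (S (j+1) x0) (S (j+1) 0) := by
        rw [h1]; exact ⟨hle, by norm_num⟩
      obtain ⟨x1, hx1, hfx1⟩ := hiv hmem
      exact hjnz (j+1) (by omega) hjk x1 (hsub hx1) hfx1

lemma S_anti (k : ℕ) (hk : 1 ≤ k) (b : ℝ) (hb0 : 0 ≤ b) (hb1 : b < 1)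
    (hnz : ∀ x ∈ Set.Icc (0:ℝ) b, S k x ≠ 0) :
    ∀ j, 1 ≤ j → j ≤ k → ∀ x1 ∈ Set.Icc (0:ℝ) b, ∀ x2 ∈ Set.Icc (0:ℝ) b,
      x1 ≤ x2 → S j x2 ≤ S j x1 := by
  intro j
  induction j with
  | zero => intro h; exact absurd h (by norm_num)
  | succ j ih =>
    intro _ hjk x1 hx1 x2 hx2 h12
    rcases Nat.eq_zero_or_pos j with rfl | hj0
    · rw [S_one, S_one]; linarith
    · have hpos := (S_poscont k hk b hb0 hb1 hnz j hj0 (by omega)).2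
      have ha := ih hj0 (by omega) x1 hx1 x2 hx2 h12
      rw [S_succ_eq j hj0, S_succ_eq j hj0]
      have h1 : 0 < S j x1 := hpos x1 hx1
      have h2 : 0 < S j x2 := hpos x2 hx2
      have hdiv : x1 / S j x1 ≤ x2 / S j x2 :=
        div_le_div₀ hx2.1 h12 h2 ha
      linarith

lemma S_chord (k : ℕ) (hk : 1 ≤ k) (b : ℝ) (hb0 : 0 ≤ b) (hb1 : b < 1)
    (hnz : ∀ x ∈ Set.Icc (0:ℝ) b, S k x ≠ 0) :
    ∀ j, 1 ≤ j → j ≤ k → ∀ t : ℝ, 0 ≤ t → t ≤ 1 → ∀ z ∈ Set.Icc (0:ℝ) b,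
      1 - t * (1 - S j z) ≤ S j (t * z) := by
  intro j
  induction j with
  | zero => intro h; exact absurd h (by norm_num)
  | succ j ih =>
    intro _ hjk t ht0 ht1 z hz
    have htzz : t * z ≤ z := by nlinarith [hz.1]
    have htz : t * z ∈ Set.Icc (0:ℝ) b :=
      ⟨mul_nonneg ht0 hz.1, le_trans htzz hz.2⟩
    rcases Nat.eq_zero_or_pos j with rfl | hj0
    · rw [S_one, S_one]
      have : 1 - t * (1 - (1 - z)) = 1 - t * z := by ring
      rw [this]
    · have hpos := (S_poscont k hk b hb0 hb1 hnz j hj0 (by omega)).2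
      have hant := S_anti k hk b hb0 hb1 hnz j hj0 (by omega) (t*z) htz z hz htzz
      have hIH := ih hj0 (by omega) t ht0 ht1 z hz
      have ha : 0 < S j (t*z) := hpos _ htz
      have hbz : 0 < S j z := hpos _ hz
      rw [S_succ_eq j hj0, S_succ_eq j hj0]
      have hdiv : (t*z) / S j (t*z) ≤ (t*z) / S j z :=
        div_le_div₀ (mul_nonneg ht0 hz.1) le_rfl hbz hant
      have hexp : 1 - t * (1 - (S j z - z / S j z))
          = (1 - t * (1 - S j z)) - (t*z)/S j z := by ring
      rw [hexp]
      linarith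

lemma Sk_val_bound (k : ℕ) (hk : 1 ≤ k)
    (hnz : ∀ x ∈ Set.Icc (0:ℝ) (1/(2*(k:ℝ))), S k x ≠ 0) :
    S k (1/(2*(k:ℝ))) ^ 4 ≤ 1/(4*(k:ℝ)) := by
  have hK : (1:ℝ) ≤ (k:ℝ) := by exact_mod_cast hk
  set K := (k:ℝ) with hKdef
  have hK0 : (0:ℝ) < K := by linarith
  set c := 1/(2*K) with hcdef
  have hc0 : 0 < c := by positivity
  have hc1 : c < 1 := by rw [hcdef, div_lt_one (by positivity)]; linarith
  have hpos : ∀ j, 1 ≤ j → j ≤ k → 0 < S j c := fun j hj hjk =>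
    (S_poscont k hk c hc0.le hc1 hnz j hj hjk).2 c ⟨hc0.le, le_rfl⟩
  set r := Real.sqrt K with hrdef
  have hr0 : 0 < r := Real.sqrt_pos.mpr hK0
  have hr2 : r^2 = K := Real.sq_sqrt hK0.le
  have hr1 : 1 ≤ r := by nlinarith
  set A := 1/(2*r) with hAdef
  set d := 1/K - 1/(2*K*r) with hddef
  have hA0 : 0 < A := by positivity
  have hdec : ∀ i, 1 ≤ i → i + 1 ≤ k → S (i+1) c ^ 2 ≤ S i c ^2 ∧
      S (i+1) c ^ 2 = S i c ^2 - 2*c + c^2/(S i c ^2) := by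
    intro i hi hik
    have hpi : 0 < S i c := hpos i hi (by omega)
    have hpi1 : 0 < S (i+1) c := hpos (i+1) (by omega) hik
    have heq : S (i+1) c = S i c - c / S i c := S_succ_eq i hi c
    constructor
    · have h1 : S (i+1) c ≤ S i c := by
        rw [heq]; nlinarith [div_nonneg hc0.le hpi.le]
      exact pow_le_pow_left₀ hpi1.le h1 2
    · rw [heq]; field_simp; ring
  have hcA : c^2 / A = 1/(2*K*r) := by
    rw [hcdef, hAdef]
    field_simp
    nlinarith [hr2]
  have claim : ∀ i, i + 1 ≤ k → S (i+1) c ^2 ≤ A ∨ S (i+1) c ^2 ≤ (1-c)^2 - (i:ℝ)*d := by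
    intro i
    induction i with
    | zero => intro _; right; rw [S_one]; push_cast; norm_num
    | succ i ih =>
      intro hik
      obtain ⟨hmono, hrec⟩ := hdec (i+1) (by omega) hik
      rcases le_or_gt (S (i+1) c ^2) A with hle | hgt
      · left; exact le_trans hmono hle
      · rcases ih (by omega) with hle | hright
        · exact absurd hle (not_le.mpr hgt)
        · right
          have hdivle : c^2 / (S (i+1) c ^2) ≤ c^2 / A :=
            div_le_div_of_nonneg_left (by positivity) hA0 hgt.le
          rw [hcA] at hdivle
          have h2c : 2*c = 1/K := by rw [hcdef]; ring
          have hstep : S (i+1+1) c ^2 ≤ S (i+1) c ^2 - d := by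
            rw [hrec, hddef]; linarith [h2c]
          push_cast
          linarith
  have hfin := claim (k-1) (by omega)
  have hk1 : k - 1 + 1 = k := by omega
  rw [hk1] at hfin
  have hcast : ((k-1:ℕ):ℝ) = K - 1 := by
    rw [Nat.cast_sub hk, Nat.cast_one]
  rw [hcast] at hfin
  have harith : (1-c)^2 - (K-1)*d ≤ A := by
    rw [hcdef, hddef, hAdef, ← hr2]
    have key : (1 - 1/(2*r^2))^2 - (r^2-1)*(1/(r^2) - 1/(2*r^2*r))
        = 1/(2*r) + (1-2*r)/(4*r^4) := by
      field_simp
      ring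
    rw [key]
    have hneg : (1-2*r)/(4*r^4) ≤ 0 :=
      div_nonpos_of_nonpos_of_nonneg (by linarith) (by positivity)
    linarith
  have hukA : S k c ^2 ≤ A := hfin.elim id (fun h => le_trans h harith)
  have hsq : (S k c ^2)^2 ≤ A^2 := pow_le_pow_left₀ (sq_nonneg _) hukA 2
  have hA2 : A^2 = 1/(4*K) := by
    rw [hAdef, div_pow, ← hr2]; ring_nf
  calc S k c ^4 = (S k c^2)^2 := by ring
  _ ≤ A^2 := hsq
  _ = 1/(4*K) := hA2

theorem stmt5 (k : ℕ) (hk : 1 ≤ k) (zk : ℝ)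
    (hzk : IsLeast {z : ℝ | 0 < z ∧ S k z = 0} zk) :
    zk ≤ 1 / (2 * k * (1 - (1 / (4 * (k : ℝ))) ^ ((1 : ℝ) / 4))) := by
  obtain ⟨⟨hzk0, hzkS⟩, hleast⟩ := hzk
  have hK : (1:ℝ) ≤ (k:ℝ) := by exact_mod_cast hk
  have hK0 : (0:ℝ) < (k:ℝ) := by linarith
  have hS1one : S 1 1 = 0 := by rw [S_one]; ring
  have hzk1 : zk ≤ 1 := hleast ⟨one_pos, S_eq_zero_mono le_rfl hk hS1one⟩
  set ε := (1 / (4 * (k:ℝ))) ^ ((1:ℝ)/4) with hεdef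
  have hε0 : 0 < ε := Real.rpow_pos_of_pos (by positivity) _
  have hε1 : ε < 1 := by
    apply Real.rpow_lt_one (by positivity) ?_ (by norm_num)
    rw [div_lt_one (by positivity)]; linarith
  set c := 1/(2*(k:ℝ)) with hcdef
  have hc0 : 0 < c := by positivity
  have hc1 : c < 1 := by rw [hcdef, div_lt_one (by positivity)]; linarith
  have hgoal_eq : 1 / (2 * (k:ℝ) * (1 - ε)) = c / (1 - ε) := by
    rw [hcdef, div_div]
  rw [hgoal_eq]
  have hcB : c ≤ c / (1-ε) := by
    rw [le_div_iff₀ (by linarith)]; nlinarith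
  have hnzgen : ∀ b, 0 ≤ b → b < zk → ∀ x ∈ Set.Icc (0:ℝ) b, S k x ≠ 0 := by
    intro b hb hbz x hx hSx
    rcases eq_or_lt_of_le hx.1 with heq | hx0
    · rw [← heq, S_apply_zero k hk] at hSx; norm_num at hSx
    · have := hleast ⟨hx0, hSx⟩; linarith [hx.2]
  rcases le_or_gt zk c with hzc | hcz
  · exact le_trans hzc hcB
  · have hnzc := hnzgen c hc0.le hcz
    have hSkc4 : S k c ^4 ≤ 1/(4*(k:ℝ)) := Sk_val_bound k hk hnzc
    have hSkc0 : 0 < S k c :=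
      (S_poscont k hk c hc0.le hc1 hnzc k hk le_rfl).2 c ⟨hc0.le, le_rfl⟩
    have hε4 : ε ^ (4:ℕ) = 1/(4*(k:ℝ)) := by
      rw [hεdef, ← Real.rpow_natCast _ 4, ← Real.rpow_mul (by positivity)]
      norm_num
    have hSkε : S k c ≤ ε := by
      apply le_of_pow_le_pow_left₀ (n := 4) (by norm_num) hε0.le
      rw [hε4]; exact hSkc4
    by_contra hcon
    push_neg at hcon
    set B := c/(1-ε) with hBdef
    have hBz : B < zk := hcon
    set z' := (B + zk)/2 with hz'def
    have hz'1 : B < z' := by rw [hz'def]; linarith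
    have hz'2 : z' < zk := by rw [hz'def]; linarith
    have hz'c : c < z' := lt_of_le_of_lt hcB hz'1
    have hz'0 : 0 < z' := lt_trans hc0 hz'c
    have hz'lt1 : z' < 1 := lt_of_lt_of_le hz'2 hzk1
    have hnz' := hnzgen z' hz'0.le hz'2
    have hchord := S_chord k hk z' hz'0.le hz'lt1 hnz' k hk le_rfl (c/z')
      (by positivity) (by rw [div_le_one hz'0]; linarith) z' ⟨hz'0.le, le_rfl⟩
    rw [div_mul_cancel₀ c hz'0.ne'] at hchord
    have hSz' : 0 < S k z' :=
      (S_poscont k hk z' hz'0.le hz'lt1 hnz' k hk le_rfl).2 z' ⟨hz'0.le, le_rfl⟩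
    have h2 : 1 - c/z' ≤ ε := by
      have h3 : 1 - c/z' ≤ 1 - (c/z')*(1 - S k z') := by
        nlinarith [div_nonneg hc0.le hz'0.le]
      linarith
    have h4 : z' * (1 - ε) ≤ c := by
      have h3 : 1 - ε ≤ c/z' := by linarith
      calc z' * (1-ε) ≤ z' * (c/z') := by nlinarith
      _ = c := by field_simp
    have h5 : z' ≤ B := by
      rw [hBdef, le_div_iff₀ (by linarith)]; linarith
    linarith
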